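/- arXiv:1208.5791 — 2 statements merged into one kernel-verified Lean document; each statement's English description precedes it below -/
import Mathlib

section
/- If additionally H_S preserves H_G (i.e., H_S|γ⟩ ∈ H_G for all |γ⟩ ∈ H_G), then e^{-iHt} restricted to H_G ⊗ H_B factorizes as e^{-iH_S t} ⊗ e^{-iH_B' t}, and hence for any initial product state ρ_G ⊗ ρ_B with ρ_G supported on H_G, the reduced system state at time t is e^{-iH_S t} ρ_G e^{iH_S t}: the good subspace evolves unitarily and decoherence-free. -/
/-!
On `HG ⊗ ℂ^dB` each coupling operator `S α` acts as the scalar `c α`, so there `H` coincides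
with the Kronecker sum `H_S ⊗ 1 + 1 ⊗ H_B'`. That subspace is invariant under the Kronecker sum
because `H_S` preserves `HG`, hence every power, and so the exponential, of `H` agrees on it with
that of the Kronecker sum, and the exponential of a Kronecker sum is the Kronecker product of the
exponentials.

For the reduced state, the columns of `ρG` and of `ρGᴴ` lie in `HG`, so conjugating `ρG ⊗ ρB` by
the unitary `e^{-iHt}` gives `(U_S ρG U_S†) ⊗ (U_B ρB U_B†)`, whose partial trace over the bath is
`U_S ρG U_S†` times `tr ρB = 1`. Unitarity of `U_B` needs the `c α` to be real, which they are as
eigenvalues of the Hermitian `S α`, except when `HG = 0`; but then `ρG = 0`.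
-/

open Matrix Kronecker

noncomputable section

/-- Tensor product of a system vector and a bath vector. -/
def vecTensor {m n : Type*} (γ : m → ℂ) (β : n → ℂ) : m × n → ℂ :=
  fun p => γ p.1 * β p.2

/-- Partial trace over the bath factor. -/
def ptrB {m n : Type*} [Fintype n] (M : Matrix (m × n) (m × n) ℂ) :
    Matrix m m ℂ :=
  Matrix.of fun i j => ∑ k, M (i, k) (j, k)

open NormedSpace

namespace Matrix

section Exp

variable {n 𝕂 : Type*} [Fintype n] [DecidableEq n] [RCLike 𝕂]

theorem pow_mulVec_eq_of_eqOn {α : Type*} [Semiring α] {M N : Matrix n n α} {W : Set (n → α)}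
    (hN : ∀ w ∈ W, N *ᵥ w ∈ W) (hMN : ∀ w ∈ W, M *ᵥ w = N *ᵥ w) (k : ℕ) :
    ∀ w ∈ W, (M ^ k) *ᵥ w = (N ^ k) *ᵥ w := by
  induction k with
  | zero => simp
  | succ k ih =>
    intro w hw
    rw [pow_succ, pow_succ, ← mulVec_mulVec, ← mulVec_mulVec, hMN w hw, ih _ (hN w hw)]

open scoped Matrix.Norms.Operator in
theorem exp_mulVec_eq_of_pow_mulVec_eq {M N : Matrix n n 𝕂} {w : n → 𝕂}
    (h : ∀ k : ℕ, (M ^ k) *ᵥ w = (N ^ k) *ᵥ w) :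
    exp M *ᵥ w = exp N *ᵥ w := by
  let evalAt : Matrix n n 𝕂 →+ (n → 𝕂) := mulVec.addMonoidHomLeft w
  have hcont : Continuous evalAt := continuous_id.matrix_mulVec continuous_const
  have hM := (exp_series_hasSum_exp' (𝕂 := 𝕂) M).map evalAt hcont
  have hN := (exp_series_hasSum_exp' (𝕂 := 𝕂) N).map evalAt hcont
  have hterms : evalAt ∘ (fun k ↦ (k.factorial⁻¹ : 𝕂) • M ^ k) =
      evalAt ∘ (fun k ↦ (k.factorial⁻¹ : 𝕂) • N ^ k) := by
    ext k : 1
    simp [evalAt, mulVec.addMonoidHomLeft, smul_mulVec, h k]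
  exact hM.unique (hterms ▸ hN)

theorem exp_mulVec_eq_of_eqOn {M N : Matrix n n 𝕂} {W : Set (n → 𝕂)}
    (hN : ∀ w ∈ W, N *ᵥ w ∈ W) (hMN : ∀ w ∈ W, M *ᵥ w = N *ᵥ w) {w : n → 𝕂} (hw : w ∈ W) :
    exp M *ᵥ w = exp N *ᵥ w :=
  exp_mulVec_eq_of_pow_mulVec_eq fun k ↦ pow_mulVec_eq_of_eqOn hN hMN k w hw

theorem exp_smul_mul_exp_neg_smul (M : Matrix n n 𝕂) (a : 𝕂) :
    exp (a • M) * exp ((-a) • M) = 1 := by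
  rw [← exp_add_of_commute _ _ ((Commute.refl M).smul_left _ |>.smul_right _), ← add_smul,
    add_neg_cancel, zero_smul, exp_zero]

theorem IsHermitian.star_eq_of_mulVec_eq_smul {A : Matrix n n 𝕂} (hA : A.IsHermitian)
    {v : n → 𝕂} (hv : v ≠ 0) {c : 𝕂} (h : A *ᵥ v = c • v) :
    star c = c := by
  have hvec : Module.End.HasEigenvector A.toEuclideanLin c (WithLp.toLp 2 v) := by
    refine ⟨?_, by simpa using hv⟩
    rw [Module.End.mem_eigenspace_iff]
    simp [h]
  exact (isSymmetric_toEuclideanLin_iff.mpr hA).conj_eigenvalue_eq_self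
    (Module.End.hasEigenvalue_of_hasEigenvector hvec)

theorem IsHermitian.conjTranspose_exp_neg_I_mul_smul {M : Matrix n n ℂ} (hM : M.IsHermitian)
    (t : ℝ) :
    (NormedSpace.exp ((-(Complex.I * t)) • M))ᴴ = NormedSpace.exp ((Complex.I * t) • M) := by
  rw [← exp_conjTranspose, conjTranspose_smul, hM.eq]
  simp

end Exp

section Kronecker

variable {m n : Type*}

theorem IsHermitian.kronecker {α : Type*} [CommRing α] [StarRing α] {A : Matrix m m α}
    {B : Matrix n n α} (hA : A.IsHermitian) (hB : B.IsHermitian) : (A ⊗ₖ B).IsHermitian := by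
  rw [IsHermitian, conjTranspose_kronecker, hA.eq, hB.eq]

variable [DecidableEq m] [DecidableEq n]

def kroneckerSum {α : Type*} [CommSemiring α] (A : Matrix m m α) (B : Matrix n n α) :
    Matrix (m × n) (m × n) α :=
  A ⊗ₖ 1 + 1 ⊗ₖ B

theorem smul_kroneckerSum {α : Type*} [CommSemiring α] (a : α) (A : Matrix m m α)
    (B : Matrix n n α) : a • kroneckerSum A B = kroneckerSum (a • A) (a • B) := by
  rw [kroneckerSum, kroneckerSum, smul_add, smul_kronecker, kronecker_smul]

variable [Fintype m] [Fintype n]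

variable (n) in
def kroneckerOneAlgHom (R : Type*) [CommSemiring R] :
    Matrix m m R →ₐ[R] Matrix (m × n) (m × n) R where
  toFun A := A ⊗ₖ 1
  map_one' := one_kronecker_one
  map_mul' A B := by rw [← mul_kronecker_mul, one_mul]
  map_zero' := zero_kronecker 1
  map_add' A B := add_kronecker A B 1
  commutes' r := by simp [Algebra.algebraMap_eq_smul_one, smul_kronecker]

variable (m) in
def oneKroneckerAlgHom (R : Type*) [CommSemiring R] :
    Matrix n n R →ₐ[R] Matrix (m × n) (m × n) R where
  toFun B := 1 ⊗ₖ B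
  map_one' := one_kronecker_one
  map_mul' A B := by rw [← mul_kronecker_mul, one_mul]
  map_zero' := kronecker_zero 1
  map_add' A B := kronecker_add 1 A B
  commutes' r := by simp [Algebra.algebraMap_eq_smul_one, kronecker_smul]

open scoped Matrix.Norms.Operator in
theorem exp_kroneckerSum {𝕂 : Type*} [RCLike 𝕂] (A : Matrix m m 𝕂) (B : Matrix n n 𝕂) :
    exp (kroneckerSum A B) = exp A ⊗ₖ exp B := by
  have hcomm : Commute (A ⊗ₖ (1 : Matrix n n 𝕂)) ((1 : Matrix m m 𝕂) ⊗ₖ B) := by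
    simp [Commute, SemiconjBy, ← mul_kronecker_mul]
  have hA : exp (A ⊗ₖ (1 : Matrix n n 𝕂)) = exp A ⊗ₖ 1 :=
    (map_exp (kroneckerOneAlgHom n 𝕂)
      (kroneckerOneAlgHom n 𝕂).toLinearMap.continuous_of_finiteDimensional A).symm
  have hB : exp ((1 : Matrix m m 𝕂) ⊗ₖ B) = 1 ⊗ₖ exp B :=
    (map_exp (oneKroneckerAlgHom m 𝕂)
      (oneKroneckerAlgHom m 𝕂).toLinearMap.continuous_of_finiteDimensional B).symm
  rw [kroneckerSum, exp_add_of_commute _ _ hcomm, hA, hB, ← mul_kronecker_mul, mul_one, one_mul]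

end Kronecker

end Matrix

open Matrix

section VecTensor

variable {m n : Type*}

theorem vecTensor_add_right (γ : m → ℂ) (β₁ β₂ : n → ℂ) :
    vecTensor γ (β₁ + β₂) = vecTensor γ β₁ + vecTensor γ β₂ := by
  ext p
  simp [vecTensor, mul_add]

variable [Fintype n]

theorem ptrB_kronecker (X : Matrix m m ℂ) (Y : Matrix n n ℂ) :
    ptrB (X ⊗ₖ Y) = Y.trace • X := by
  ext i j
  simp [ptrB, trace, Finset.mul_sum, mul_comm]

variable [Fintype m]

theorem kronecker_mulVec_vecTensor {m' n' : Type*} (A : Matrix m' m ℂ) (B : Matrix n' n ℂ)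
    (γ : m → ℂ) (β : n → ℂ) :
    (A ⊗ₖ B) *ᵥ vecTensor γ β = vecTensor (A *ᵥ γ) (B *ᵥ β) := by
  ext ⟨i, k⟩
  simp only [mulVec, dotProduct, vecTensor, kroneckerMap_apply, Fintype.sum_prod_type,
    Finset.sum_mul_sum]
  exact Finset.sum_congr rfl fun j _ ↦ Finset.sum_congr rfl fun l _ ↦ by ring

theorem sum_kronecker_mulVec_vecTensor {ι : Type*} [Fintype ι] {S : ι → Matrix m m ℂ}
    {c : ι → ℂ} {γ : m → ℂ} (hγ : ∀ α, S α *ᵥ γ = c α • γ) (T : ι → Matrix n n ℂ)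
    (β : n → ℂ) :
    (∑ α, S α ⊗ₖ T α) *ᵥ vecTensor γ β = vecTensor γ ((∑ α, c α • T α) *ᵥ β) := by
  ext p
  simp only [sum_mulVec, kronecker_mulVec_vecTensor, hγ, Finset.sum_apply, vecTensor,
    Pi.smul_apply, smul_eq_mul, smul_mulVec, Finset.mul_sum]
  exact Finset.sum_congr rfl fun _ _ ↦ by ring

theorem mul_kronecker_eq_of_mulVec_vecTensor {m' n' : Type*} [Fintype m'] [Fintype n']
    [DecidableEq m'] [DecidableEq n'] {G : Set (m → ℂ)} {U : Matrix (m × n) (m × n) ℂ}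
    {A : Matrix m m ℂ} {B : Matrix n n ℂ}
    (hU : ∀ γ ∈ G, ∀ β, U *ᵥ vecTensor γ β = vecTensor (A *ᵥ γ) (B *ᵥ β))
    {X : Matrix m m' ℂ} (hX : ∀ v, X *ᵥ v ∈ G) (Y : Matrix n n' ℂ) :
    U * (X ⊗ₖ Y) = (A * X) ⊗ₖ (B * Y) := by
  ext ⟨i, k⟩ ⟨j, l⟩
  have h := congrFun (hU _ (hX (Pi.single j 1)) (Y *ᵥ Pi.single l 1)) (i, k)
  rw [mulVec_single_one, mulVec_single_one] at h
  simpa [mul_apply, mulVec, dotProduct, vecTensor, Fintype.sum_prod_type] using h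

variable [DecidableEq m] [DecidableEq n]

theorem mul_kronecker_mul_conjTranspose_eq {G : Set (m → ℂ)} {U : Matrix (m × n) (m × n) ℂ}
    {A : Matrix m m ℂ} {B : Matrix n n ℂ}
    (hU : ∀ γ ∈ G, ∀ β, U *ᵥ vecTensor γ β = vecTensor (A *ᵥ γ) (B *ᵥ β))
    {X : Matrix m m ℂ} (hX : ∀ v, X *ᵥ v ∈ G) (hXH : ∀ v, Xᴴ *ᵥ v ∈ G) (Y : Matrix n n ℂ) :
    U * (X ⊗ₖ Y) * Uᴴ = (A * X * Aᴴ) ⊗ₖ (B * Y * Bᴴ) := by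
  have hAX : ∀ v, (A * X)ᴴ *ᵥ v ∈ G := fun v ↦ by
    rw [conjTranspose_mul, ← mulVec_mulVec]
    exact hXH _
  calc U * (X ⊗ₖ Y) * Uᴴ = (U * ((A * X) ⊗ₖ (B * Y))ᴴ)ᴴ := by
        rw [mul_kronecker_eq_of_mulVec_vecTensor hU hX, conjTranspose_mul,
          conjTranspose_conjTranspose]
    _ = (A * X * Aᴴ) ⊗ₖ (B * Y * Bᴴ) := by
        rw [conjTranspose_kronecker, mul_kronecker_eq_of_mulVec_vecTensor hU hAX,
          conjTranspose_kronecker]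
        simp only [conjTranspose_mul, conjTranspose_conjTranspose, Matrix.mul_assoc]

theorem kroneckerSum_mulVec_vecTensor (A : Matrix m m ℂ) (B : Matrix n n ℂ) (γ : m → ℂ)
    (β : n → ℂ) :
    kroneckerSum A B *ᵥ vecTensor γ β = vecTensor (A *ᵥ γ) β + vecTensor γ (B *ᵥ β) := by
  rw [kroneckerSum, add_mulVec, kronecker_mulVec_vecTensor, kronecker_mulVec_vecTensor,
    one_mulVec, one_mulVec]

theorem exp_smul_mulVec_vecTensor {G : Set (m → ℂ)} {H : Matrix (m × n) (m × n) ℂ}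
    {A : Matrix m m ℂ} {B : Matrix n n ℂ} (hA : ∀ γ ∈ G, A *ᵥ γ ∈ G)
    (hH : ∀ γ ∈ G, ∀ β, H *ᵥ vecTensor γ β = kroneckerSum A B *ᵥ vecTensor γ β)
    (a : ℂ) {γ : m → ℂ} (hγ : γ ∈ G) (β : n → ℂ) :
    exp (a • H) *ᵥ vecTensor γ β = vecTensor (exp (a • A) *ᵥ γ) (exp (a • B) *ᵥ β) := by
  let W : Submodule ℂ (m × n → ℂ) := Submodule.span ℂ {v | ∃ γ ∈ G, ∃ β, v = vecTensor γ β}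
  have hmem : ∀ γ ∈ G, ∀ β, vecTensor γ β ∈ W := fun γ hγ β ↦
    Submodule.subset_span ⟨γ, hγ, β, rfl⟩
  have hK : W ≤ W.comap (kroneckerSum A B).mulVecLin := by
    refine Submodule.span_le.mpr ?_
    rintro _ ⟨γ, hγ, β, rfl⟩
    rw [SetLike.mem_coe, Submodule.mem_comap, mulVecLin_apply, kroneckerSum_mulVec_vecTensor]
    exact W.add_mem (hmem _ (hA γ hγ) β) (hmem γ hγ _)
  have hHK : Set.EqOn H.mulVecLin (kroneckerSum A B).mulVecLin W := by
    refine LinearMap.eqOn_span' ?_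
    rintro _ ⟨γ, hγ, β, rfl⟩
    exact hH γ hγ β
  have hexp : exp (a • H) *ᵥ vecTensor γ β = exp (a • kroneckerSum A B) *ᵥ vecTensor γ β := by
    refine exp_mulVec_eq_of_eqOn (W := W) (fun w hw ↦ ?_) (fun w hw ↦ ?_) (hmem γ hγ β)
    · rw [smul_mulVec]
      exact W.smul_mem a (hK hw)
    · rw [smul_mulVec, smul_mulVec]
      exact congrArg (a • ·) (hHK hw)
  rw [hexp, smul_kroneckerSum, exp_kroneckerSum, kronecker_mulVec_vecTensor]

end VecTensor

/-- **Hamiltonian DFS theorem.** In the setting where every `γ` in the good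
subspace `HG` is an eigenvector of each `S α` with vector-independent eigenvalue
`c α`, and `H_S` preserves `HG`, the evolution `e^{-iHt}` factorizes on
`HG ⊗ H_B` as `e^{-iH_S t} ⊗ e^{-iH_B' t}`, and for an initial product state
`ρ_G ⊗ ρ_B` with `ρ_G` supported on `HG`, the reduced system state at time `t`
is `e^{-iH_S t} ρ_G e^{iH_S t}`. -/
theorem hamiltonian_dfs_decoherence_free_evolution
    {ι : Type*} [Fintype ι] {dS dB : ℕ}
    (HS : Matrix (Fin dS) (Fin dS) ℂ) (HB : Matrix (Fin dB) (Fin dB) ℂ)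
    (S : ι → Matrix (Fin dS) (Fin dS) ℂ) (B : ι → Matrix (Fin dB) (Fin dB) ℂ)
    (hHS : HS.IsHermitian) (hHB : HB.IsHermitian)
    (hS : ∀ α, (S α).IsHermitian) (hB : ∀ α, (B α).IsHermitian)
    (HG : Submodule ℂ (Fin dS → ℂ))
    (c : ι → ℂ)
    (hEig : ∀ α, ∀ γ ∈ HG, (S α).mulVec γ = c α • γ)
    (hInv : ∀ γ ∈ HG, HS.mulVec γ ∈ HG)
    (H : Matrix (Fin dS × Fin dB) (Fin dS × Fin dB) ℂ)
    (hH : H = HS ⊗ₖ 1 + 1 ⊗ₖ HB + ∑ α, S α ⊗ₖ B α)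
    (HB' : Matrix (Fin dB) (Fin dB) ℂ)
    (hHB' : HB' = HB + ∑ α, c α • B α)
    (t : ℝ)
    (ρG : Matrix (Fin dS) (Fin dS) ℂ) (ρB : Matrix (Fin dB) (Fin dB) ℂ)
    (hρGsupp : (∀ v, ρG.mulVec v ∈ HG) ∧ (∀ v, ρGᴴ.mulVec v ∈ HG))
    (hρB : ρB.trace = 1) :
    (∀ γ ∈ HG, ∀ β : Fin dB → ℂ,
      (NormedSpace.exp ((-(Complex.I * t)) • H)).mulVec (vecTensor γ β) =
        vecTensor ((NormedSpace.exp ((-(Complex.I * t)) • HS)).mulVec γ)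
          ((NormedSpace.exp ((-(Complex.I * t)) • HB')).mulVec β)) ∧
    ptrB (NormedSpace.exp ((-(Complex.I * t)) • H) * (ρG ⊗ₖ ρB) *
        NormedSpace.exp ((Complex.I * t) • H)) =
      NormedSpace.exp ((-(Complex.I * t)) • HS) * ρG *
        NormedSpace.exp ((Complex.I * t) • HS) := by
  have hH_eq : ∀ γ ∈ HG, ∀ β, H *ᵥ vecTensor γ β = kroneckerSum HS HB' *ᵥ vecTensor γ β := by
    intro γ hγ β
    rw [hH, hHB', add_mulVec, add_mulVec, sum_kronecker_mulVec_vecTensor (hEig · γ hγ),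
      kronecker_mulVec_vecTensor, kronecker_mulVec_vecTensor, one_mulVec, one_mulVec,
      kroneckerSum_mulVec_vecTensor, add_mulVec, vecTensor_add_right, add_assoc]
  have hU : ∀ γ ∈ HG, ∀ β : Fin dB → ℂ,
      exp ((-(Complex.I * t)) • H) *ᵥ vecTensor γ β =
        vecTensor (exp ((-(Complex.I * t)) • HS) *ᵥ γ) (exp ((-(Complex.I * t)) • HB') *ᵥ β) :=
    fun γ hγ β ↦ exp_smul_mulVec_vecTensor hInv hH_eq _ hγ β
  refine ⟨hU, ?_⟩
  rcases eq_or_ne HG ⊥ with hbot | hne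
  · have hρG : ρG = 0 := ext_iff_mulVec.mpr fun v ↦ by
      simpa [hbot] using hρGsupp.1 v
    ext i j
    simp [hρG, ptrB]
  obtain ⟨γ₀, hγ₀, hγ₀_ne⟩ := Submodule.exists_mem_ne_zero_of_ne_bot hne
  have hc : ∀ α, IsSelfAdjoint (c α) := fun α ↦
    (hS α).star_eq_of_mulVec_eq_smul hγ₀_ne (hEig α γ₀ hγ₀)
  have hHB'_herm : HB'.IsHermitian := hHB' ▸
    hHB.add (isSelfAdjoint_sum _ fun α _ ↦ (hB α).smul (hc α))
  have hH_herm : H.IsHermitian := hH ▸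
    ((hHS.kronecker isHermitian_one).add (isHermitian_one.kronecker hHB)).add
      (isSelfAdjoint_sum _ fun α _ ↦ (hS α).kronecker (hB α))
  rw [← hH_herm.conjTranspose_exp_neg_I_mul_smul,
    mul_kronecker_mul_conjTranspose_eq hU hρGsupp.1 hρGsupp.2, ptrB_kronecker, trace_mul_cycle,
    hHB'_herm.conjTranspose_exp_neg_I_mul_smul, exp_smul_mul_exp_neg_smul, one_mul, hρB,
    one_smul, hHS.conjTranspose_exp_neg_I_mul_smul]
end
end

section
/- For N qubits with linear coupling H_SB = Σ_{α∈{x,y,z}} Σ_{i=1}^N σ_α^{(i)}⊗B_α^{(i)} and N even, the group average of H_SB over G = {I^{⊗N}, σ_x^{⊗N}, σ_y^{⊗N}, σ_z^{⊗N}} vanishes: (1/4) Σ_{g∈G} (g⊗I_B)† H_SB (g⊗I_B) = 0. -/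
open Matrix Kronecker

noncomputable section

def pauliX : Matrix (Fin 2) (Fin 2) ℂ := !![0, 1; 1, 0]
def pauliY : Matrix (Fin 2) (Fin 2) ℂ := !![0, -Complex.I; Complex.I, 0]
def pauliZ : Matrix (Fin 2) (Fin 2) ℂ := !![1, 0; 0, -1]

/-- A single-qubit operator `A` acting on the `i`-th factor of `(ℂ²)^{⊗N}`. -/
def onQubit (N : ℕ) (i : Fin N) (A : Matrix (Fin 2) (Fin 2) ℂ) :
    Matrix (Fin N → Fin 2) (Fin N → Fin 2) ℂ :=
  Matrix.of fun x y =>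
    ∏ j, if j = i then A (x j) (y j) else (if x j = y j then 1 else 0)

/-- The `N`-fold tensor power `A^{⊗N}`. -/
def tensorPow (N : ℕ) (A : Matrix (Fin 2) (Fin 2) ℂ) :
    Matrix (Fin N → Fin 2) (Fin N → Fin 2) ℂ :=
  Matrix.of fun x y => ∏ j, A (x j) (y j)

/-!
Conjugating `A^{(i)} ⊗ B` by `U^{⊗N} ⊗ 1` with `U` unitary gives `(U† A U)^{(i)} ⊗ B`:
on every other qubit the factors `U†` and `U` cancel. Hence the sum over `G` sends
`σ_α^{(i)} ⊗ B` to `(Σ_P P† σ_α P)^{(i)} ⊗ B`, `P` running over `1, σ_x, σ_y, σ_z`.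
On one qubit `Σ_P P† A P = 2 tr(A) · 1`, and the Pauli matrices are traceless.
-/

namespace Matrix

variable {ι n R : Type*} [Fintype ι]

def piKronecker [CommMonoid R] (M : ι → Matrix n n R) : Matrix (ι → n) (ι → n) R :=
  of fun x y => ∏ j, M j (x j) (y j)

theorem piKronecker_mul [DecidableEq ι] [Fintype n] [CommSemiring R] (M M' : ι → Matrix n n R) :
    piKronecker M * piKronecker M' = piKronecker (M * M') := by
  ext x y
  simp only [piKronecker, mul_apply, of_apply, Pi.mul_apply, ← Finset.prod_mul_distrib]
  exact (Fintype.prod_sum fun j a => M j (x j) a * M' j a (y j)).symm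

theorem conjTranspose_piKronecker [CommMonoid R] [StarMul R] (M : ι → Matrix n n R) :
    (piKronecker M)ᴴ = piKronecker fun j => (M j)ᴴ := by
  ext x y
  simp [piKronecker, conjTranspose_apply, star_prod]

theorem kronecker_one_conj_kronecker {m : Type*} [Fintype m] [Fintype n]
    [DecidableEq n] [CommSemiring R] [StarRing R] (T S : Matrix m m R) (B : Matrix n n R) :
    (T ⊗ₖ (1 : Matrix n n R))ᴴ * (S ⊗ₖ B) * (T ⊗ₖ 1) = (Tᴴ * S * T) ⊗ₖ B := by
  rw [conjTranspose_kronecker, conjTranspose_one, ← mul_kronecker_mul, ← mul_kronecker_mul,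
    one_mul, mul_one]

def conjAddMonoidHom {m : Type*} [Fintype m] [NonUnitalNonAssocSemiring R] [Star R]
    (g : Matrix m m R) : Matrix m m R →+ Matrix m m R :=
  (AddMonoidHom.mulRight g).comp (AddMonoidHom.mulLeft gᴴ)

theorem conjAddMonoidHom_apply {m : Type*} [Fintype m] [NonUnitalNonAssocSemiring R]
    [Star R] (g T : Matrix m m R) : g.conjAddMonoidHom T = gᴴ * T * g := rfl

end Matrix

theorem pauli_conj_sum_eq_two_trace_smul_one (A : Matrix (Fin 2) (Fin 2) ℂ) :
    1ᴴ * A * 1 + pauliXᴴ * A * pauliX + pauliYᴴ * A * pauliY + pauliZᴴ * A * pauliZ =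
      (2 * trace A) • 1 := by
  ext i j
  fin_cases i <;> fin_cases j <;>
    simp [pauliX, pauliY, pauliZ, mul_apply, Fin.sum_univ_two, trace, one_apply] <;>
    ring_nf <;> simp only [Complex.I_sq] <;> ring

theorem trace_pauliX : trace pauliX = 0 := by simp [trace, pauliX]

theorem trace_pauliY : trace pauliY = 0 := by simp [trace, pauliY]

theorem trace_pauliZ : trace pauliZ = 0 := by simp [trace, pauliZ]

theorem pauliX_conjTranspose_mul_self : pauliXᴴ * pauliX = 1 := by
  ext i j; fin_cases i <;> fin_cases j <;> simp [pauliX, mul_apply]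

theorem pauliY_conjTranspose_mul_self : pauliYᴴ * pauliY = 1 := by
  ext i j; fin_cases i <;> fin_cases j <;> simp [pauliY, mul_apply]

theorem pauliZ_conjTranspose_mul_self : pauliZᴴ * pauliZ = 1 := by
  ext i j; fin_cases i <;> fin_cases j <;> simp [pauliZ, mul_apply]

theorem tensorPow_eq_piKronecker (N : ℕ) (A : Matrix (Fin 2) (Fin 2) ℂ) :
    tensorPow N A = piKronecker fun _ : Fin N => A := rfl

theorem onQubit_eq_piKronecker (N : ℕ) (i : Fin N) (A : Matrix (Fin 2) (Fin 2) ℂ) :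
    onQubit N i A = piKronecker (Pi.mulSingle i A : Fin N → Matrix (Fin 2) (Fin 2) ℂ) := by
  ext x y
  simp only [onQubit, piKronecker, of_apply]
  refine Finset.prod_congr rfl fun j _ => ?_
  by_cases h : j = i
  · subst h; simp
  · simp [h, one_apply]

theorem onQubit_apply (N : ℕ) (i : Fin N) (A : Matrix (Fin 2) (Fin 2) ℂ)
    (x y : Fin N → Fin 2) :
    onQubit N i A x y =
      A (x i) (y i) * ∏ j ∈ Finset.univ.erase i, if x j = y j then 1 else 0 := by
  rw [onQubit, of_apply, ← Finset.mul_prod_erase _ _ (Finset.mem_univ i), if_pos rfl]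
  exact congrArg _ (Finset.prod_congr rfl fun j hj => if_neg (Finset.ne_of_mem_erase hj))

theorem onQubit_add (N : ℕ) (i : Fin N) (A A' : Matrix (Fin 2) (Fin 2) ℂ) :
    onQubit N i (A + A') = onQubit N i A + onQubit N i A' := by
  ext x y
  simp only [onQubit_apply, Matrix.add_apply, add_mul]

theorem onQubit_zero (N : ℕ) (i : Fin N) : onQubit N i 0 = 0 := by
  ext x y
  simp only [onQubit_apply, Matrix.zero_apply, zero_mul]

theorem tensorPow_conjTranspose_mul_onQubit_mul_tensorPow (N : ℕ) (i : Fin N)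
    {U : Matrix (Fin 2) (Fin 2) ℂ} (hU : Uᴴ * U = 1) (A : Matrix (Fin 2) (Fin 2) ℂ) :
    (tensorPow N U)ᴴ * onQubit N i A * tensorPow N U = onQubit N i (Uᴴ * A * U) := by
  simp only [tensorPow_eq_piKronecker, onQubit_eq_piKronecker, conjTranspose_piKronecker,
    piKronecker_mul]
  congr 1
  funext j
  exact Pi.apply_mulSingle (fun _ B => Uᴴ * B * U) (fun _ => by simpa using hU) i A j

def collectivePauliConjSum (N dB : ℕ) :
    Matrix ((Fin N → Fin 2) × Fin dB) ((Fin N → Fin 2) × Fin dB) ℂ →+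
      Matrix ((Fin N → Fin 2) × Fin dB) ((Fin N → Fin 2) × Fin dB) ℂ :=
  let lift U := tensorPow N U ⊗ₖ (1 : Matrix (Fin dB) (Fin dB) ℂ)
  (lift 1).conjAddMonoidHom + (lift pauliX).conjAddMonoidHom +
    (lift pauliY).conjAddMonoidHom + (lift pauliZ).conjAddMonoidHom

theorem collectivePauliConjSum_onQubit_kronecker {N dB : ℕ} (i : Fin N)
    (A : Matrix (Fin 2) (Fin 2) ℂ) (B : Matrix (Fin dB) (Fin dB) ℂ) :
    collectivePauliConjSum N dB (onQubit N i A ⊗ₖ B) =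
      onQubit N i ((2 * trace A) • 1) ⊗ₖ B := by
  have conj_eq {U} (hU : Uᴴ * U = 1) :
      (tensorPow N U ⊗ₖ (1 : Matrix (Fin dB) (Fin dB) ℂ)).conjAddMonoidHom
          (onQubit N i A ⊗ₖ B) = onQubit N i (Uᴴ * A * U) ⊗ₖ B := by
    rw [conjAddMonoidHom_apply, kronecker_one_conj_kronecker,
      tensorPow_conjTranspose_mul_onQubit_mul_tensorPow N i hU]
  simp only [collectivePauliConjSum, AddMonoidHom.add_apply, conj_eq (U := 1) (by simp),
    conj_eq pauliX_conjTranspose_mul_self, conj_eq pauliY_conjTranspose_mul_self,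
    conj_eq pauliZ_conjTranspose_mul_self, ← add_kronecker, ← onQubit_add,
    pauli_conj_sum_eq_two_trace_smul_one]

theorem linear_coupling_group_average_vanishes_general
    {N dB : ℕ}
    (Bx By Bz : Fin N → Matrix (Fin dB) (Fin dB) ℂ)
    (HSB : Matrix ((Fin N → Fin 2) × Fin dB) ((Fin N → Fin 2) × Fin dB) ℂ)
    (hHSB : HSB = ∑ i, (onQubit N i pauliX ⊗ₖ Bx i +
      onQubit N i pauliY ⊗ₖ By i + onQubit N i pauliZ ⊗ₖ Bz i)) :
    (1 / 4 : ℂ) •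
      ((tensorPow N 1 ⊗ₖ (1 : Matrix (Fin dB) (Fin dB) ℂ))ᴴ * HSB *
          (tensorPow N 1 ⊗ₖ (1 : Matrix (Fin dB) (Fin dB) ℂ)) +
        (tensorPow N pauliX ⊗ₖ (1 : Matrix (Fin dB) (Fin dB) ℂ))ᴴ * HSB *
          (tensorPow N pauliX ⊗ₖ (1 : Matrix (Fin dB) (Fin dB) ℂ)) +
        (tensorPow N pauliY ⊗ₖ (1 : Matrix (Fin dB) (Fin dB) ℂ))ᴴ * HSB *
          (tensorPow N pauliY ⊗ₖ (1 : Matrix (Fin dB) (Fin dB) ℂ)) +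
        (tensorPow N pauliZ ⊗ₖ (1 : Matrix (Fin dB) (Fin dB) ℂ))ᴴ * HSB *
          (tensorPow N pauliZ ⊗ₖ (1 : Matrix (Fin dB) (Fin dB) ℂ))) = 0 := by
  change (1 / 4 : ℂ) • collectivePauliConjSum N dB HSB = 0
  simp only [hHSB, map_sum, map_add, collectivePauliConjSum_onQubit_kronecker, trace_pauliX,
    trace_pauliY, trace_pauliZ, mul_zero, zero_smul, onQubit_zero, zero_kronecker, add_zero,
    Finset.sum_const_zero, smul_zero]

/-- **First-order decoupling of linear system-bath coupling.** For `N` even and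
`H_SB = Σ_α Σ_i σ_α^{(i)} ⊗ B_α^{(i)}`, the average of the conjugations of
`H_SB` by `G = {I^{⊗N}, σ_x^{⊗N}, σ_y^{⊗N}, σ_z^{⊗N}}` (tensored with the bath
identity) vanishes. -/
theorem linear_coupling_group_average_vanishes
    {N dB : ℕ} (hN : Even N)
    (Bx By Bz : Fin N → Matrix (Fin dB) (Fin dB) ℂ)
    (HSB : Matrix ((Fin N → Fin 2) × Fin dB) ((Fin N → Fin 2) × Fin dB) ℂ)
    (hHSB : HSB = ∑ i, (onQubit N i pauliX ⊗ₖ Bx i +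
      onQubit N i pauliY ⊗ₖ By i + onQubit N i pauliZ ⊗ₖ Bz i)) :
    (1 / 4 : ℂ) •
      ((tensorPow N 1 ⊗ₖ (1 : Matrix (Fin dB) (Fin dB) ℂ))ᴴ * HSB *
          (tensorPow N 1 ⊗ₖ (1 : Matrix (Fin dB) (Fin dB) ℂ)) +
        (tensorPow N pauliX ⊗ₖ (1 : Matrix (Fin dB) (Fin dB) ℂ))ᴴ * HSB *
          (tensorPow N pauliX ⊗ₖ (1 : Matrix (Fin dB) (Fin dB) ℂ)) +
        (tensorPow N pauliY ⊗ₖ (1 : Matrix (Fin dB) (Fin dB) ℂ))ᴴ * HSB *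
          (tensorPow N pauliY ⊗ₖ (1 : Matrix (Fin dB) (Fin dB) ℂ)) +
        (tensorPow N pauliZ ⊗ₖ (1 : Matrix (Fin dB) (Fin dB) ℂ))ᴴ * HSB *
          (tensorPow N pauliZ ⊗ₖ (1 : Matrix (Fin dB) (Fin dB) ℂ))) = 0 :=
  linear_coupling_group_average_vanishes_general Bx By Bz HSB hHSB
end
end
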